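/- arXiv:0801.0579 — 4 statements merged into one kernel-verified Lean document; each statement's English description precedes it below -/
import Mathlib

section
/- If Alice has a winning strategy for the discrete bidding game G(a, b*) (Alice holds a chips, Bob holds b chips plus the tie-breaking advantage), then Alice also has a winning strategy for G(a*, b) (Alice holds a chips plus the tie-breaking advantage, Bob holds b chips). In other words, holding the tie-breaking advantage is never a disadvantage. -/
/-!
Induction along the least fixed point `AliceWins`, with the invariant "Alice wins both with
and without the advantage". The strict-bid cases are unaffected by who holds the advantage.
On a tie, when Bob holds the advantage Alice must in particular survive Bob claiming the bid
and handing her the advantage; holding the advantage herself, Alice can produce exactly that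
position by declaring Bob the winner of the bid and keeping it.
-/

/-- A two-player game for discrete bidding play, modeled on a directed graph:
vertices are positions, `red` edges are Alice's legal moves, `blue` edges are
Bob's legal moves, and `aliceWinsAt`/`bobWinsAt` mark the winning (terminal)
positions of each player. -/
structure BiddingGame (V : Type) where
  start : V
  red : V → V → Prop
  blue : V → V → Prop
  aliceWinsAt : V → Prop
  bobWinsAt : V → Prop

namespace BiddingGame

variable {V : Type}

/-- The game with the roles of Alice and Bob exchanged. -/
def dual (G : BiddingGame V) : BiddingGame V where
  start := G.start
  red := G.blue
  blue := G.red
  aliceWinsAt := G.bobWinsAt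
  bobWinsAt := G.aliceWinsAt

/-- Alice has just won the bid at position `v` with chip counts `a`, `b` and
advantage flag `adv`: she decides who makes the next move.  If she moves
herself she picks a red edge; if she makes Bob move, Bob picks any blue edge.
`W` is the predicate "Alice can force a win from this configuration". -/
def afterAlice (G : BiddingGame V) (W : V → ℕ → ℕ → Bool → Prop)
    (v : V) (a b : ℕ) (adv : Bool) : Prop :=
  (∃ w, G.red v w ∧ W w a b adv) ∨ (∀ w, G.blue v w → W w a b adv)

/-- Bob has just won the bid: he decides who makes the next move, and Alice
must be able to cope with both of his options. -/
def afterBob (G : BiddingGame V) (W : V → ℕ → ℕ → Bool → Prop)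
    (v : V) (a b : ℕ) (adv : Bool) : Prop :=
  (∀ w, G.blue v w → W w a b adv) ∧ (∃ w, G.red v w ∧ W w a b adv)

/-- One round of bidding, from Alice's point of view.  Alice's bid `α ≤ a` may
not depend on Bob's simultaneous bid `β ≤ b`.  The higher bidder pays the bid
to the opponent and decides who makes the next move; on tied bids the holder
of the tie-breaking advantage (`adv = true` iff Alice holds it) either
declares themselves the winner of the bid, giving the advantage to the
opponent, or declares the opponent the winner of the bid, keeping the
advantage. -/
def winStep (G : BiddingGame V) (W : V → ℕ → ℕ → Bool → Prop)
    (v : V) (a b : ℕ) (adv : Bool) : Prop :=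
  G.aliceWinsAt v ∨
  ∃ α, α ≤ a ∧ ∀ β, β ≤ b →
    (β < α → afterAlice G W v (a - α) (b + α) adv) ∧
    (α < β → afterBob G W v (a + β) (b - β) adv) ∧
    (β = α → adv = true →
      (afterAlice G W v (a - α) (b + α) false ∨
       afterBob G W v (a + α) (b - α) true)) ∧
    (β = α → adv = false →
      (afterBob G W v (a + α) (b - α) true ∧
       afterAlice G W v (a - α) (b + α) false))

/-- `AliceWins G v a b adv` : Alice has a winning strategy for the discrete
bidding game `G` from position `v`, where Alice holds `a` chips, Bob holds `b`
chips, and `adv = true` iff Alice holds the tie-breaking advantage.  This is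
the least fixed point of the one-round operator `winStep`: the smallest
predicate containing the positions where Alice has already won and closed
under one round of bidding. -/
def AliceWins (G : BiddingGame V) (v : V) (a b : ℕ) (adv : Bool) : Prop :=
  ∀ W : V → ℕ → ℕ → Bool → Prop,
    (∀ v' a' b' adv', winStep G W v' a' b' adv' → W v' a' b' adv') →
    W v a b adv

/-- `BobWins G v a b adv` : Bob has a winning strategy; here `a` is Alice's
chip count, `b` is Bob's chip count and `adv = true` iff Alice holds the
tie-breaking advantage. -/
def BobWins (G : BiddingGame V) (v : V) (a b : ℕ) (adv : Bool) : Prop :=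
  AliceWins G.dual v b a (!adv)

end BiddingGame

open BiddingGame

namespace BiddingGame

variable {V : Type} (G : BiddingGame V)

lemma afterAlice_imp {W₁ W₂ : V → ℕ → ℕ → Bool → Prop} {v : V} {a b : ℕ}
    {adv₁ adv₂ : Bool} (h : ∀ w, W₁ w a b adv₁ → W₂ w a b adv₂) :
    afterAlice G W₁ v a b adv₁ → afterAlice G W₂ v a b adv₂ := by
  rintro (⟨w, hred, hw⟩ | hblue)
  · exact Or.inl ⟨w, hred, h w hw⟩
  · exact Or.inr fun w hw => h w (hblue w hw)

lemma afterBob_imp {W₁ W₂ : V → ℕ → ℕ → Bool → Prop} {v : V} {a b : ℕ}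
    {adv₁ adv₂ : Bool} (h : ∀ w, W₁ w a b adv₁ → W₂ w a b adv₂) :
    afterBob G W₁ v a b adv₁ → afterBob G W₂ v a b adv₂ := by
  rintro ⟨hblue, w, hred, hw⟩
  exact ⟨fun w hw => h w (hblue w hw), w, hred, h w hw⟩

lemma winStep_mono {W₁ W₂ : V → ℕ → ℕ → Bool → Prop}
    (h : ∀ v a b adv, W₁ v a b adv → W₂ v a b adv) {v : V} {a b : ℕ} {adv : Bool} :
    winStep G W₁ v a b adv → winStep G W₂ v a b adv := by
  rintro (hwon | ⟨α, hα, hbid⟩)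
  · exact Or.inl hwon
  refine Or.inr ⟨α, hα, fun β hβ => ?_⟩
  obtain ⟨hlt, hgt, htieA, htieB⟩ := hbid β hβ
  have hA {a b adv} : afterAlice G W₁ v a b adv → afterAlice G W₂ v a b adv :=
    afterAlice_imp G fun w => h w a b adv
  have hB {a b adv} : afterBob G W₁ v a b adv → afterBob G W₂ v a b adv :=
    afterBob_imp G fun w => h w a b adv
  exact ⟨fun hβα => hA (hlt hβα), fun hαβ => hB (hgt hαβ),
    fun heq hadv => (htieA heq hadv).imp hA hB, fun heq hadv => (htieB heq hadv).imp hB hA⟩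

lemma winStep_true_of_winStep {W : V → ℕ → ℕ → Bool → Prop}
    (hW : ∀ v a b adv, W v a b adv → W v a b true) {v : V} {a b : ℕ} {adv : Bool} :
    winStep G W v a b adv → winStep G W v a b true := by
  rintro (hwon | ⟨α, hα, hbid⟩)
  · exact Or.inl hwon
  refine Or.inr ⟨α, hα, fun β hβ => ?_⟩
  obtain ⟨hlt, hgt, htieA, htieB⟩ := hbid β hβ
  refine ⟨fun hβα => afterAlice_imp G (fun w => hW w _ _ _) (hlt hβα),
    fun hαβ => afterBob_imp G (fun w => hW w _ _ _) (hgt hαβ), fun heq _ => ?_, nofun⟩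
  cases adv with
  | false => exact Or.inr (htieB heq rfl).1
  | true => exact htieA heq rfl

theorem aliceWins_true_of_aliceWins {v : V} {a b : ℕ} {adv : Bool}
    (h : AliceWins G v a b adv) :
    AliceWins G v a b true := by
  intro W hW
  refine (h (fun v a b adv => W v a b adv ∧ W v a b true) fun v a b adv hstep => ?_).2
  have hstepTrue := winStep_true_of_winStep G (fun _ _ _ _ hw => ⟨hw.2, hw.2⟩) hstep
  exact ⟨hW _ _ _ _ (winStep_mono G (fun _ _ _ _ => And.left) hstep),
    hW _ _ _ _ (winStep_mono G (fun _ _ _ _ => And.left) hstepTrue)⟩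

end BiddingGame

/-- **Lemma (the tie-breaking advantage is never a disadvantage).**
If Alice has a winning strategy for `G(a, b*)` (Alice holds `a` chips, Bob
holds `b` chips plus the tie-breaking advantage), then she also has a winning
strategy for `G(a*, b)` (Alice holds `a` chips plus the tie-breaking
advantage, Bob holds `b` chips). -/
theorem tie_breaking_advantage_is_an_advantage {V : Type} (G : BiddingGame V)
    (a b : ℕ) (h : AliceWins G G.start a b false) :
    AliceWins G G.start a b true :=
  aliceWins_true_of_aliceWins G h
end

section
/- In any discrete bidding game, both players have optimal strategies in which they use the tie-breaking advantage whenever the bids are tied at a nonzero value. Precisely: if a player has a strategy guaranteeing a given outcome (win, or at least a draw) from a given chip configuration, then that player has a strategy guaranteeing the same outcome in which, whenever they hold the tie-breaking advantage and the bids are tied at a nonzero amount, they declare themselves the winner of the bid. -/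
namespace BiddingGame

variable {V : Type}

/-- One round of bidding, from Alice's point of view, with optional
restrictions on how ties are resolved: if `forceP = true` then Alice (the
protagonist), whenever she holds the tie-breaking advantage and the bids are
tied at a nonzero amount, must declare herself the winner of the bid; if
`forceO = true` then the opponent is restricted in the same way. -/
def winStepT (G : BiddingGame V) (forceP forceO : Bool)
    (W : V → ℕ → ℕ → Bool → Prop) (v : V) (a b : ℕ) (adv : Bool) : Prop :=
  G.aliceWinsAt v ∨
  ∃ α, α ≤ a ∧ ∀ β, β ≤ b →
    (β < α → afterAlice G W v (a - α) (b + α) adv) ∧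
    (α < β → afterBob G W v (a + β) (b - β) adv) ∧
    (β = α → adv = true →
      (afterAlice G W v (a - α) (b + α) false ∨
       (¬ (forceP = true ∧ α ≠ 0) ∧ afterBob G W v (a + α) (b - α) true))) ∧
    (β = α → adv = false →
      (afterBob G W v (a + α) (b - α) true ∧
       (¬ (forceO = true ∧ α ≠ 0) → afterAlice G W v (a - α) (b + α) false)))

/-- `WinsT G forceP forceO v a b adv` : Alice has a strategy winning the
discrete bidding game `G` from position `v` (Alice holding `a` chips, Bob `b`
chips, `adv = true` iff Alice holds the tie-breaking advantage) subject to the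
tie-resolution restrictions: if `forceP = true`, Alice's strategy must always
use the tie-breaking advantage on nonzero tied bids; if `forceO = true`, the
opponent is restricted to strategies that always use the advantage on nonzero
tied bids.  `WinsT G false false` is the unrestricted notion of Alice having
a winning strategy. -/
def WinsT (G : BiddingGame V) (forceP forceO : Bool)
    (v : V) (a b : ℕ) (adv : Bool) : Prop :=
  ∀ W : V → ℕ → ℕ → Bool → Prop,
    (∀ v' a' b' adv', winStepT G forceP forceO W v' a' b' adv' → W v' a' b' adv') →
    W v a b adv

end BiddingGame

open BiddingGame

/-!
A winning strategy can be modified locally, one round at a time, using two facts: more chips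
for Alice and fewer for Bob never hurt her, and the tie-breaking advantage is worth at most one
chip. If Alice holds the advantage and would decline a nonzero tie at bid `α`, she bids `α - 1`
instead: a bid of Bob's `≥ α` meets the original strategy, and a tie at `α - 1`, which she now
wins by using the advantage, leaves her at least as well off as winning against Bob's bid `0`
with the advantage retained. An opponent who declines a nonzero tie at `α` hands Alice the bid
at price `α` and keeps the advantage, exactly as if he had bid `0`.
-/

namespace BiddingGame

variable {V : Type} {G : BiddingGame V} {fP fO : Bool} {W W' : V → ℕ → ℕ → Bool → Prop}
  {v : V} {a b a' b' α : ℕ} {adv adv' : Bool}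

/-- Alice's bid `α` wins the round of `winStepT` against every bid of Bob's. -/
def SafeBid (G : BiddingGame V) (fP fO : Bool) (W : V → ℕ → ℕ → Bool → Prop)
    (v : V) (a b : ℕ) (adv : Bool) (α : ℕ) : Prop :=
  ∀ β, β ≤ b →
    (β < α → afterAlice G W v (a - α) (b + α) adv) ∧
    (α < β → afterBob G W v (a + β) (b - β) adv) ∧
    (β = α → adv = true →
      (afterAlice G W v (a - α) (b + α) false ∨
       (¬ (fP = true ∧ α ≠ 0) ∧ afterBob G W v (a + α) (b - α) true))) ∧
    (β = α → adv = false →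
      (afterBob G W v (a + α) (b - α) true ∧
       (¬ (fO = true ∧ α ≠ 0) → afterAlice G W v (a - α) (b + α) false)))

theorem winStepT_iff :
    winStepT G fP fO W v a b adv ↔ G.aliceWinsAt v ∨ ∃ α ≤ a, SafeBid G fP fO W v a b adv α :=
  Iff.rfl

def ChipMonotone (W : V → ℕ → ℕ → Bool → Prop) : Prop :=
  ∀ ⦃v a b a' b' adv⦄, a ≤ a' → b' ≤ b → W v a b adv → W v a' b' adv

theorem afterAlice.imp (h : ∀ w, W w a b adv → W' w a' b' adv') :
    afterAlice G W v a b adv → afterAlice G W' v a' b' adv' := by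
  rintro (⟨w, hr, hw⟩ | hall)
  · exact Or.inl ⟨w, hr, h w hw⟩
  · exact Or.inr fun w hb => h w (hall w hb)

theorem afterBob.imp (h : ∀ w, W w a b adv → W' w a' b' adv') :
    afterBob G W v a b adv → afterBob G W' v a' b' adv' := by
  rintro ⟨hall, w, hr, hw⟩
  exact ⟨fun w hb => h w (hall w hb), w, hr, h w hw⟩

theorem SafeBid.mono (hWW' : ∀ v a b adv, W v a b adv → W' v a b adv)
    (h : SafeBid G fP fO W v a b adv α) : SafeBid G fP fO W' v a b adv α := by
  have hA {a b adv} : afterAlice G W v a b adv → afterAlice G W' v a b adv :=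
    afterAlice.imp fun w => hWW' w a b adv
  have hB {a b adv} : afterBob G W v a b adv → afterBob G W' v a b adv :=
    afterBob.imp fun w => hWW' w a b adv
  intro β hβ
  obtain ⟨h1, h2, h3, h4⟩ := h β hβ
  refine ⟨fun hlt => hA (h1 hlt), fun hlt => hB (h2 hlt), fun he ha => ?_,
    fun he ha => ⟨hB (h4 he ha).1, fun hn => hA ((h4 he ha).2 hn)⟩⟩
  exact (h3 he ha).imp hA fun ⟨hn, hb⟩ => ⟨hn, hB hb⟩

theorem afterAlice.mono_chips (hW : ChipMonotone W) (ha : a ≤ a') (hb : b' ≤ b) :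
    afterAlice G W v a b adv → afterAlice G W v a' b' adv :=
  afterAlice.imp fun _ => hW ha hb

theorem afterBob.mono_chips (hW : ChipMonotone W) (ha : a ≤ a') (hb : b' ≤ b) :
    afterBob G W v a b adv → afterBob G W v a' b' adv :=
  afterBob.imp fun _ => hW ha hb

theorem SafeBid.mono_chips (hW : ChipMonotone W) (ha : a ≤ a') (hb : b' ≤ b)
    (h : SafeBid G fP fO W v a b adv α) : SafeBid G fP fO W v a' b' adv α := by
  intro β hβ
  obtain ⟨h1, h2, h3, h4⟩ := h β (hβ.trans hb)
  refine ⟨fun hlt => (h1 hlt).mono_chips hW (by omega) (by omega),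
    fun hlt => (h2 hlt).mono_chips hW (by omega) (by omega), fun he ha => ?_,
    fun he ha => ⟨(h4 he ha).1.mono_chips hW (by omega) (by omega),
      fun hn => ((h4 he ha).2 hn).mono_chips hW (by omega) (by omega)⟩⟩
  exact (h3 he ha).imp (·.mono_chips hW (by omega) (by omega))
    fun ⟨hn, hb⟩ => ⟨hn, hb.mono_chips hW (by omega) (by omega)⟩

theorem winStepT.mono (hWW' : ∀ v a b adv, W v a b adv → W' v a b adv) :
    winStepT G fP fO W v a b adv → winStepT G fP fO W' v a b adv := by
  simp only [winStepT_iff]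
  exact Or.imp_right fun ⟨α, hα, h⟩ => ⟨α, hα, h.mono hWW'⟩

theorem WinsT.of_winStepT (h : winStepT G fP fO (WinsT G fP fO) v a b adv) :
    WinsT G fP fO v a b adv :=
  fun W hW => hW _ _ _ _ (h.mono fun _ _ _ _ hw => hw W hW)

theorem WinsT.of_winsT {fP' fO' : Bool}
    (hstep : ∀ v a b adv, winStepT G fP fO (WinsT G fP' fO') v a b adv →
      winStepT G fP' fO' (WinsT G fP' fO') v a b adv)
    (h : WinsT G fP fO v a b adv) : WinsT G fP' fO' v a b adv :=
  h _ fun _ _ _ _ hs => of_winStepT (hstep _ _ _ _ hs)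

theorem chipMonotone_winsT : ChipMonotone (WinsT G fP fO) := by
  intro v a b a' b' adv ha hb h
  let P v a b adv := ∀ a' b', a ≤ a' → b' ≤ b → WinsT G fP fO v a' b' adv
  have hP : ChipMonotone P := fun _ _ _ _ _ _ ha hb h a' b' ha' hb' =>
    h a' b' (ha.trans ha') (hb'.trans hb)
  refine h P (fun v a b adv hstep a' b' ha hb => WinsT.of_winStepT ?_) a' b' ha hb
  rw [winStepT_iff] at hstep ⊢
  refine hstep.imp_right fun ⟨α, hα, hsafe⟩ => ⟨α, hα.trans ha, ?_⟩
  exact (hsafe.mono_chips hP ha hb).mono fun _ _ _ _ hw => hw _ _ le_rfl le_rfl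

section AdvantageToChip

variable (hW' : ChipMonotone W') (hWW' : ∀ v a b adv, W v a b adv → W' v a b adv)
  (htrade : ∀ v a b, 1 ≤ b → W v a b true → W' v (a + 1) (b - 1) false)

include hW' htrade in
theorem afterAlice.trade (hb : 1 ≤ b) (ha' : a + 1 ≤ a') (hb' : b' ≤ b - 1) :
    afterAlice G W v a b true → afterAlice G W' v a' b' false :=
  afterAlice.imp fun w hw => hW' ha' hb' (htrade w a b hb hw)

include hW' htrade in
theorem afterBob.trade (hb : 1 ≤ b) (ha' : a + 1 ≤ a') (hb' : b' ≤ b - 1) :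
    afterBob G W v a b true → afterBob G W' v a' b' false :=
  afterBob.imp fun w hw => hW' ha' hb' (htrade w a b hb hw)

include hW' hWW' htrade in
theorem SafeBid.succ_of_useAdvantage (hb : 1 ≤ b)
    (hA : afterAlice G W' v (a - α) (b + α) false)
    (hgt : ∀ β, α < β → β ≤ b → afterBob G W v (a + β) (b - β) true) :
    SafeBid G fP fO W' v (a + 1) (b - 1) false (α + 1) := by
  have hA' : afterAlice G W' v (a + 1 - (α + 1)) (b - 1 + (α + 1)) false :=
    hA.mono_chips hW' (by omega) (by omega)
  refine fun β hβ => ⟨fun _ => hA', fun hlt => ?_, fun _ ha => absurd ha (by simp),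
    fun he _ => ⟨?_, fun _ => hA'⟩⟩
  · exact (hgt β (by omega) (by omega)).trade hW' htrade (by omega) (by omega) (by omega)
  · exact ((hgt (α + 1) (by omega) (by omega)).imp fun w => hWW' w _ _ _).mono_chips hW'
      (by omega) (by omega)

include hW' hWW' htrade in
theorem SafeBid.of_declineAdvantage (hb : 1 ≤ b) (hα : α ≤ a)
    (h : SafeBid G fP fO W v a b true α)
    (hdecline : α < b → afterBob G W v (a + α) (b - α) true) :
    SafeBid G fP fO W' v (a + 1) (b - 1) false α := by
  have hA : afterAlice G W' v (a + 1 - α) (b - 1 + α) false := by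
    rcases Nat.eq_zero_or_pos α with rfl | hα
    · obtain ⟨-, w, hr, hw⟩ := hdecline (by omega)
      exact Or.inl ⟨w, hr, hW' (by omega) (by omega) (htrade w _ _ hb hw)⟩
    · exact ((h 0 (Nat.zero_le b)).1 hα).trade hW' htrade (by omega) (by omega) (by omega)
  refine fun β hβ => ⟨fun hlt => ?_, fun hlt => ?_, fun _ ha => absurd ha (by simp),
    fun he _ => ⟨?_, fun _ => hA⟩⟩
  · exact ((h β (by omega)).1 hlt).trade hW' htrade (by omega) (by omega) (by omega)
  · exact ((h β (by omega)).2.1 hlt).trade hW' htrade (by omega) (by omega) (by omega)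
  · exact ((hdecline (by omega)).imp fun w => hWW' w _ _ _).mono_chips hW' (by omega) (by omega)

include hW' hWW' htrade in
/-- Trading the advantage for a chip, Alice raises her bid by one where she would have used the
advantage on a tie, and otherwise keeps it. -/
theorem SafeBid.exists_of_advantage (hb : 1 ≤ b) (hα : α ≤ a)
    (h : SafeBid G fP fO W v a b true α) :
    ∃ α' ≤ a + 1, SafeBid G fP fO W' v (a + 1) (b - 1) false α' := by
  obtain hA | hdecline : afterAlice G W v (a - α) (b + α) false ∨
      (α < b → afterBob G W v (a + α) (b - α) true) := by
    by_cases hαb : α ≤ b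
    · exact ((h α hαb).2.2.1 rfl rfl).imp_right fun ⟨_, hB⟩ _ => hB
    · exact Or.inr fun hlt => absurd hlt (by omega)
  · exact ⟨α + 1, by omega, SafeBid.succ_of_useAdvantage hW' hWW' htrade hb
      (hA.imp fun w => hWW' w _ _ _) fun β hlt hβ => (h β hβ).2.1 hlt⟩
  · exact ⟨α, by omega, SafeBid.of_declineAdvantage hW' hWW' htrade hb hα h hdecline⟩

end AdvantageToChip

theorem WinsT.chip_of_advantage (hb : 1 ≤ b) (h : WinsT G fP fO v a b true) :
    WinsT G fP fO v (a + 1) (b - 1) false := by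
  let P v a b adv := WinsT G fP fO v a b adv ∧
    (adv = true → 1 ≤ b → WinsT G fP fO v (a + 1) (b - 1) false)
  refine (h P fun v a b adv hstep => ⟨of_winStepT (hstep.mono fun _ _ _ _ => And.left),
    fun hadv hb => of_winStepT ?_⟩).2 rfl hb
  subst hadv
  rw [winStepT_iff] at hstep ⊢
  refine hstep.imp_right fun ⟨α, hα, hsafe⟩ => ?_
  exact hsafe.exists_of_advantage (W := P) chipMonotone_winsT (fun _ _ _ _ => And.left)
    (fun _ _ _ hb (hw : P _ _ _ true) => hw.2 rfl hb) hb hα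

section RestrictProtagonist

variable (hW : ChipMonotone W)
  (htrade : ∀ v a b, 1 ≤ b → W v a b true → W v (a + 1) (b - 1) false)

theorem SafeBid.restrict_of_useAdvantage
    (huse : adv = true → α ≠ 0 → α ≤ b → afterAlice G W v (a - α) (b + α) false)
    (h : SafeBid G false fO W v a b adv α) : SafeBid G true fO W v a b adv α := by
  intro β hβ
  obtain ⟨h1, h2, h3, h4⟩ := h β hβ
  refine ⟨h1, h2, fun he ha => ?_, h4⟩
  by_cases hα : α = 0
  · exact (h3 he ha).imp_right fun ⟨_, hB⟩ => ⟨fun hc => hc.2 hα, hB⟩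
  · exact Or.inl (huse ha hα (he ▸ hβ))

include hW htrade in
theorem SafeBid.undercut (hα : 0 < α) (hαa : α ≤ a)
    (h : SafeBid G false fO W v a b true α) (hB : afterBob G W v (a + α) (b - α) true) :
    SafeBid G true fO W v a b true (α - 1) := by
  refine fun β hβ => ⟨fun hlt => ?_, fun hlt => ?_, fun _ _ => Or.inl ?_,
    fun _ ha => absurd ha (by simp)⟩
  · exact ((h β hβ).1 (by omega)).mono_chips hW (by omega) (by omega)
  · rcases (show α ≤ β by omega).eq_or_lt with rfl | hlt
    · exact hB
    · exact (h β hβ).2.1 hlt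
  · exact ((h 0 (Nat.zero_le b)).1 hα).trade hW htrade (by omega) (by omega) (by omega)

include hW htrade in
theorem SafeBid.exists_restrict (hα : α ≤ a) (h : SafeBid G false fO W v a b adv α) :
    ∃ α' ≤ a, SafeBid G true fO W v a b adv α' := by
  by_cases hdecline : adv = true ∧ α ≠ 0 ∧ α ≤ b ∧ ¬ afterAlice G W v (a - α) (b + α) false
  · obtain ⟨rfl, hα0, hαb, hnA⟩ := hdecline
    have hB := ((h α hαb).2.2.1 rfl rfl).resolve_left hnA
    exact ⟨α - 1, by omega, h.undercut hW htrade (by omega) hα hB.2⟩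
  · refine ⟨α, hα, h.restrict_of_useAdvantage fun hadv hα0 hαb => ?_⟩
    by_contra hnA
    exact hdecline ⟨hadv, hα0, hαb, hnA⟩

end RestrictProtagonist

theorem WinsT.restrict_protagonist (h : WinsT G false fO v a b adv) :
    WinsT G true fO v a b adv := by
  refine h.of_winsT fun v a b adv hstep => ?_
  rw [winStepT_iff] at hstep ⊢
  exact hstep.imp_right fun ⟨α, hα, hsafe⟩ => hsafe.exists_restrict chipMonotone_winsT
    (fun _ _ _ hb hw => hw.chip_of_advantage hb) hα

theorem SafeBid.unrestrict_opponent (h : SafeBid G fP true W v a b adv α) :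
    SafeBid G fP false W v a b adv α := by
  intro β hβ
  obtain ⟨h1, h2, h3, h4⟩ := h β hβ
  refine ⟨h1, h2, h3, fun he hadv => ⟨(h4 he hadv).1, fun _ => ?_⟩⟩
  rcases Nat.eq_zero_or_pos α with hα | hα
  · exact (h4 he hadv).2 fun hc => hc.2 hα
  · exact hadv ▸ (h 0 (Nat.zero_le b)).1 hα

theorem WinsT.unrestrict_opponent (h : WinsT G fP true v a b adv) :
    WinsT G fP false v a b adv := by
  refine h.of_winsT fun v a b adv hstep => ?_
  rw [winStepT_iff] at hstep ⊢
  exact hstep.imp_right fun ⟨α, hα, hsafe⟩ => ⟨α, hα, hsafe.unrestrict_opponent⟩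

end BiddingGame

/-- **Proposition (always use the tie-breaking advantage on nonzero ties).**
Both players have optimal strategies in which they use the tie-breaking
advantage whenever the bids are nonzero and tied.  Precisely, for any
configuration (position `v`, Alice holding `a` chips, Bob holding `b` chips,
`adv = true` iff Alice holds the tie-breaking advantage):

* if Alice has a winning strategy, she has one that always declares herself
  the winner of nonzero tied bids when she holds the advantage;
* if Alice has a strategy guaranteeing at least a draw (i.e. Bob has no
  winning strategy), then Bob still has no winning strategy when Alice is
  restricted to such tie-using strategies;
* and the two analogous statements hold for Bob (via the dual game, in which
  Bob is the protagonist, holding `b` chips and holding the advantage iff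
  Alice does not). -/
theorem use_the_tie_breaking_advantage {V : Type} (G : BiddingGame V)
    (v : V) (a b : ℕ) (adv : Bool) :
    (WinsT G false false v a b adv → WinsT G true false v a b adv) ∧
    (¬ WinsT G.dual false false v b a (!adv) →
      ¬ WinsT G.dual false true v b a (!adv)) ∧
    (WinsT G.dual false false v b a (!adv) →
      WinsT G.dual true false v b a (!adv)) ∧
    (¬ WinsT G false false v a b adv → ¬ WinsT G false true v a b adv) :=
  ⟨WinsT.restrict_protagonist, mt WinsT.unrestrict_opponent,
    WinsT.restrict_protagonist, mt WinsT.unrestrict_opponent⟩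
end

section
/- Let G be a finite discrete bidding game and let ε > 0. Then there exists N such that Bob has a stable strategy preventing Alice from winning G(a*, b) whenever a/(a+b) < R(G) − ε and b ≥ N. -/
namespace BiddingGame

variable {V : Type}

/-- Real-valued (Richman) bidding, Alice just won the bid and decides who
moves; total bidding resources are normalized to `1` and `x` is Alice's
share. -/
def rAfterAlice (G : BiddingGame V) (W : V → ℝ → Prop) (v : V) (x : ℝ) : Prop :=
  (∃ w, G.red v w ∧ W w x) ∨ (∀ w, G.blue v w → W w x)

/-- Real-valued (Richman) bidding, Bob just won the bid and decides who
moves. -/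
def rAfterBob (G : BiddingGame V) (W : V → ℝ → Prop) (v : V) (x : ℝ) : Prop :=
  (∀ w, G.blue v w → W w x) ∧ (∃ w, G.red v w ∧ W w x)

/-- One round of real-valued (Richman) bidding from Alice's point of view:
Alice bids `t` with `0 ≤ t ≤ x`, Bob bids `s` with `0 ≤ s ≤ 1 - x`; the higher
bidder pays the bid to the opponent and decides who moves (here Alice must win
even when all tied bids are resolved in Bob's favor). -/
def rWinStep (G : BiddingGame V) (W : V → ℝ → Prop) (v : V) (x : ℝ) : Prop :=
  (G.aliceWinsAt v ∧ 0 ≤ x ∧ x ≤ 1) ∨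
  (0 ≤ x ∧ x ≤ 1 ∧ ∃ t : ℝ, 0 ≤ t ∧ t ≤ x ∧ ∀ s : ℝ, 0 ≤ s → s ≤ 1 - x →
    (s < t → rAfterAlice G W v (x - t)) ∧
    (t ≤ s → rAfterBob G W v (x + s)))

/-- `RWins G v x` : Alice has a winning strategy for the Richman (real-valued
bidding) game `G` from position `v` when her share of the total bidding
resources is `x` (the least fixed point of `rWinStep`). -/
def RWins (G : BiddingGame V) (v : V) (x : ℝ) : Prop :=
  ∀ W : V → ℝ → Prop, (∀ v' x', rWinStep G W v' x' → W v' x') → W v x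

/-- `r` is the Richman value (critical threshold) of the game `G` played from
position `v`: Alice has a winning strategy for real-valued bidding whenever
her proportion of the total bidding resources exceeds `r`, and she has none
whenever it is less than `r`. -/
def IsRichmanValueAt (G : BiddingGame V) (v : V) (r : ℝ) : Prop :=
  0 ≤ r ∧ r ≤ 1 ∧
  (∀ x : ℝ, r < x → x ≤ 1 → RWins G v x) ∧
  (∀ x : ℝ, 0 ≤ x → x < r → ¬ RWins G v x)

/-- Restrict Alice's moves to the *stable* ones: those minimizing the Richman
value `R` of the target among her legal moves.  Alice has a stable winning
strategy in `G` iff she has a winning strategy in `restrictRed G R`. -/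
def restrictRed (G : BiddingGame V) (R : V → ℝ) : BiddingGame V :=
  { G with red := fun v w => G.red v w ∧ ∀ u, G.red v u → R w ≤ R u }

/-- Restrict Bob's moves to the *stable* ones: those maximizing the Richman
value `R` of the target among his legal moves. -/
def restrictBlue (G : BiddingGame V) (R : V → ℝ) : BiddingGame V :=
  { G with blue := fun v w => G.blue v w ∧ ∀ u, G.blue v u → R u ≤ R w }

end BiddingGame

open BiddingGame

/-!
Bob keeps Alice's chip count `a` below `f (R v) * (a + b)`, where `f x = x - e x (1 - x)` is a
slightly convex deflation of the identity, and positions of Richman value `1` count as safe for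
any chip counts. The Richman recurrence `2 R v ≤ R v⁺ + R v⁻` (Bob's best move `v⁺`, Alice's best
move `v⁻`) and the strict convexity of `f` leave, whenever a landing threatens the invariant, a
gap of at least `γ (a + b)` for some `γ > 0` depending only on the finitely many values of `R`.
Once `a + b ≥ 1 / γ` this gap exceeds one chip, which is what Bob needs to outbid Alice by one
and so keep the invariant whatever happens to the tie-breaking advantage.
-/

open Filter Topology

namespace BiddingGame

variable {V : Type} {G : BiddingGame V}

section Richman

lemma rWinStep_mono {W W' : V → ℝ → Prop} (hWW : ∀ v x, W v x → W' v x) {v : V} {x : ℝ}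
    (h : rWinStep G W v x) : rWinStep G W' v x := by
  rcases h with hv | ⟨hx0, hx1, t, ht0, htx, hbid⟩
  · exact Or.inl hv
  refine Or.inr ⟨hx0, hx1, t, ht0, htx, fun s hs0 hs1 => ⟨fun hst => ?_, fun hts => ?_⟩⟩
  · rcases (hbid s hs0 hs1).1 hst with ⟨w, hw, hW⟩ | hall
    · exact Or.inl ⟨w, hw, hWW _ _ hW⟩
    · exact Or.inr fun w hw => hWW _ _ (hall w hw)
  · obtain ⟨hall, w, hw, hW⟩ := (hbid s hs0 hs1).2 hts
    exact ⟨fun u hu => hWW _ _ (hall u hu), w, hw, hWW _ _ hW⟩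

lemma RWins.of_rWinStep {v : V} {x : ℝ} (h : rWinStep G (RWins G) v x) : RWins G v x :=
  fun W hW => hW v x (rWinStep_mono (fun _ _ hu => hu W hW) h)

lemma IsRichmanValueAt.eq_zero_of_aliceWinsAt {v : V} {r : ℝ} (hr : IsRichmanValueAt G v r)
    (hv : G.aliceWinsAt v) : r = 0 := by
  by_contra hne
  have hpos : 0 < r := lt_of_le_of_ne hr.1 (Ne.symm hne)
  exact hr.2.2.2 (r / 2) (by linarith) (by linarith)
    (RWins.of_rWinStep (Or.inl ⟨hv, by linarith, by linarith [hr.2.1]⟩))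

/-- Alice, with share just above `(m + M) / 2`, bids `(M - m) / 2`: winning the bid leaves her
more than `m`, losing it gives her more than `M`. -/
lemma IsRichmanValueAt.two_mul_le {v : V} {r m M : ℝ} (hr : IsRichmanValueAt G v r)
    (hm : 0 ≤ m) (hmM : m ≤ M)
    (hAlice : ∀ x, m < x → x ≤ 1 → rAfterAlice G (RWins G) v x)
    (hBob : ∀ x, M < x → x ≤ 1 → rAfterBob G (RWins G) v x) :
    2 * r ≤ m + M := by
  by_contra! hlt
  have hr1 := hr.2.1
  obtain ⟨x, hmx, hxr⟩ := exists_between (by linarith : (m + M) / 2 < r)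
  refine hr.2.2.2 x (by linarith) (by linarith) (RWins.of_rWinStep (Or.inr ⟨by linarith,
    by linarith, (M - m) / 2, by linarith, by linarith,
    fun s hs0 hs1 => ⟨fun _ => ?_, fun _ => ?_⟩⟩))
  · exact hAlice _ (by linarith) (by linarith)
  · exact hBob _ (by linarith) (by linarith)

/-- `p = 0` when Bob has no move: Alice then wins by winning a bid and handing him the move. -/
def IsMaxBlueValue (G : BiddingGame V) (R : V → ℝ) (v : V) (p : ℝ) : Prop :=
  (∀ u, G.blue v u → R u ≤ p) ∧ (p = 0 ∨ ∃ w, G.blue v w ∧ R w = p)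

def IsMinRedValue (G : BiddingGame V) (R : V → ℝ) (v : V) (q : ℝ) : Prop :=
  (∀ u, G.red v u → q ≤ R u) ∧ (q = 1 ∨ ∃ w, G.red v w ∧ R w = q)

lemma exists_isMaxBlueValue [Finite V] (G : BiddingGame V) (R : V → ℝ) (v : V) :
    ∃ p, IsMaxBlueValue G R v p := by
  by_cases h : ∃ u, G.blue v u
  · obtain ⟨w, hw, hmax⟩ := Set.exists_max_image {u | G.blue v u} R (Set.toFinite _) h
    exact ⟨R w, hmax, Or.inr ⟨w, hw, rfl⟩⟩
  · exact ⟨0, fun u hu => (h ⟨u, hu⟩).elim, Or.inl rfl⟩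

lemma exists_isMinRedValue [Finite V] (G : BiddingGame V) (R : V → ℝ) (v : V) :
    ∃ q, IsMinRedValue G R v q := by
  by_cases h : ∃ u, G.red v u
  · obtain ⟨w, hw, hmin⟩ := Set.exists_min_image {u | G.red v u} R (Set.toFinite _) h
    exact ⟨R w, hmin, Or.inr ⟨w, hw, rfl⟩⟩
  · exact ⟨1, fun u hu => (h ⟨u, hu⟩).elim, Or.inl rfl⟩

def extendedRange (R : V → ℝ) : Set ℝ := insert 0 (insert 1 (Set.range R))

variable {R : V → ℝ}

lemma IsMaxBlueValue.mem_extendedRange {v : V} {p : ℝ} (hp : IsMaxBlueValue G R v p) :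
    p ∈ extendedRange R := by
  rcases hp.2 with rfl | ⟨w, -, rfl⟩
  exacts [Or.inl rfl, Or.inr (Or.inr ⟨w, rfl⟩)]

lemma IsMinRedValue.mem_extendedRange {v : V} {q : ℝ} (hq : IsMinRedValue G R v q) :
    q ∈ extendedRange R := by
  rcases hq.2 with rfl | ⟨w, -, rfl⟩
  exacts [Or.inr (Or.inl rfl), Or.inr (Or.inr ⟨w, rfl⟩)]

lemma apply_mem_extendedRange (v : V) : R v ∈ extendedRange R := Or.inr (Or.inr ⟨v, rfl⟩)

lemma extendedRange_finite [Finite V] (R : V → ℝ) : (extendedRange R).Finite :=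
  ((Set.finite_range R).insert 1).insert 0

variable (hR : ∀ v, IsRichmanValueAt G v (R v))
include hR

lemma extendedRange_subset_Icc : extendedRange R ⊆ Set.Icc 0 1 := by
  rintro x (rfl | rfl | ⟨v, rfl⟩)
  exacts [⟨le_rfl, zero_le_one⟩, ⟨zero_le_one, le_rfl⟩, ⟨(hR v).1, (hR v).2.1⟩]

lemma two_mul_le_add_of_isMaxBlueValue_of_isMinRedValue {v : V} {p q : ℝ}
    (hp : IsMaxBlueValue G R v p) (hq : IsMinRedValue G R v q) : 2 * R v ≤ p + q := by
  have hred : ∀ x, q < x → x ≤ 1 → ∃ w, G.red v w ∧ RWins G w x := by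
    intro x hqx hx1
    rcases hq.2 with rfl | ⟨w, hw, rfl⟩
    · linarith
    · exact ⟨w, hw, (hR w).2.2.1 x hqx hx1⟩
  have hblue : ∀ x, p < x → x ≤ 1 → ∀ u, G.blue v u → RWins G u x :=
    fun x hpx hx1 u hu => (hR u).2.2.1 x ((hp.1 u hu).trans_lt hpx) hx1
  rw [← min_add_max]
  have hsub := extendedRange_subset_Icc hR
  refine (hR v).two_mul_le (le_min (hsub hp.mem_extendedRange).1 (hsub hq.mem_extendedRange).1)
    min_le_max
    (fun x hx hx1 => ?_) (fun x hx hx1 => ?_)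
  · rcases min_lt_iff.1 hx with hpx | hqx
    · exact Or.inr (hblue x hpx hx1)
    · exact Or.inl (hred x hqx hx1)
  · obtain ⟨hpx, hqx⟩ := max_lt_iff.1 hx
    exact ⟨hblue x hpx hx1, hred x hqx hx1⟩

end Richman

section Deflation

def deflate (e x : ℝ) : ℝ := x - e * x * (1 - x)

variable {e : ℝ}

lemma deflate_zero : deflate e 0 = 0 := by simp [deflate]

lemma deflate_le_self (he : 0 ≤ e) {x : ℝ} (hx : x ∈ Set.Icc 0 1) : deflate e x ≤ x := by
  have : 0 ≤ e * x * (1 - x) := mul_nonneg (mul_nonneg he hx.1) (by linarith [hx.2])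
  unfold deflate; linarith

lemma sub_le_deflate (he : 0 ≤ e) {x : ℝ} (hx : x ∈ Set.Icc 0 1) : x - e ≤ deflate e x := by
  have hx' : x * (1 - x) ≤ 1 := by nlinarith [hx.1, hx.2]
  have : e * x * (1 - x) ≤ e := by nlinarith [mul_le_mul_of_nonneg_left hx' he]
  unfold deflate; linarith

lemma deflate_le_deflate (he : 0 ≤ e) (he1 : e ≤ 1) {x y : ℝ} (hx : 0 ≤ x) (hxy : x ≤ y) :
    deflate e x ≤ deflate e y := by
  have : deflate e y - deflate e x = (y - x) * (1 - e + e * (x + y)) := by unfold deflate; ring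
  nlinarith [mul_nonneg (sub_nonneg.2 hxy) (by nlinarith : 0 ≤ 1 - e + e * (x + y))]

lemma deflate_gap_pos (he : 0 < e) (he1 : e ≤ 1) {y z r : ℝ} (hr : 0 ≤ r) (hyr : y < r)
    (hsum : 2 * r ≤ y + z) : 0 < deflate e y + deflate e z - 2 * deflate e r := by
  have key : deflate e y + deflate e z - 2 * deflate e r =
      (1 - e) * (y + z - 2 * r) + e * ((y - z) ^ 2 + ((y + z) ^ 2 - (2 * r) ^ 2)) / 2 := by
    unfold deflate; ring
  have hsq : (2 * r) ^ 2 ≤ (y + z) ^ 2 := pow_le_pow_left₀ (by linarith) hsum 2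
  have hyz : 0 < (y - z) ^ 2 := by nlinarith
  rw [key]
  nlinarith [mul_nonneg (sub_nonneg.2 he1) (sub_nonneg.2 hsum)]

def IsDeflationGapBound (e γ : ℝ) (s : Set ℝ) : Prop :=
  ∀ y ∈ s, ∀ z ∈ s, ∀ r ∈ s, y < r → 2 * r ≤ y + z →
    γ ≤ deflate e y + deflate e z - 2 * deflate e r

lemma exists_pos_isDeflationGapBound (he : 0 < e) (he1 : e ≤ 1) {s : Set ℝ} (hs : s.Finite)
    (hs0 : ∀ x ∈ s, 0 ≤ x) : ∃ γ > 0, IsDeflationGapBound e γ s := by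
  have h : ∀ᶠ γ in 𝓝[>] (0 : ℝ), IsDeflationGapBound e γ s := by
    simp only [IsDeflationGapBound, hs.eventually_all, eventually_imp_distrib_left]
    intro y _ z _ r hr hyr hsum
    exact eventually_nhdsWithin_of_eventually_nhds
      (eventually_le_nhds (deflate_gap_pos he he1 (hs0 r hr) hyr hsum))
  obtain ⟨γ, hγ, hγ0⟩ := (h.and self_mem_nhdsWithin).exists
  exact ⟨γ, hγ0, hγ⟩

end Deflation

section Threshold

noncomputable def chipThreshold (e : ℝ) (T : ℕ) (x : ℝ) : ℝ :=
  if x = 1 then T + 1 else deflate e x * T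

variable {e : ℝ} {T : ℕ}

lemma chipThreshold_zero : chipThreshold e T 0 = 0 := by
  simp [chipThreshold, deflate_zero]

lemma chipThreshold_of_ne_one {x : ℝ} (hx : x ≠ 1) : chipThreshold e T x = deflate e x * T :=
  if_neg hx

lemma chipThreshold_one : chipThreshold e T 1 = T + 1 := if_pos rfl

lemma deflate_mul_le_chipThreshold (x : ℝ) : deflate e x * T ≤ chipThreshold e T x := by
  unfold chipThreshold
  split_ifs with h
  · subst h; simp [deflate]
  · exact le_rfl

lemma chipThreshold_le (he : 0 ≤ e) {x : ℝ} (hx : x ∈ Set.Icc 0 1) :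
    chipThreshold e T x ≤ T + 1 := by
  unfold chipThreshold
  split_ifs
  · exact le_rfl
  · nlinarith [deflate_le_self he hx, hx.2, (Nat.cast_nonneg T : (0 : ℝ) ≤ T)]

lemma chipThreshold_mono (he : 0 ≤ e) (he1 : e ≤ 1) {x y : ℝ} (hx : 0 ≤ x) (hxy : x ≤ y)
    (hy : y ≤ 1) : chipThreshold e T x ≤ chipThreshold e T y := by
  rcases eq_or_ne y 1 with rfl | hy1
  · rw [chipThreshold_one]
    exact chipThreshold_le he ⟨hx, hxy⟩
  · rw [chipThreshold_of_ne_one hy1, chipThreshold_of_ne_one (hxy.trans_lt (hy.lt_of_ne hy1)).ne]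
    exact mul_le_mul_of_nonneg_right (deflate_le_deflate he he1 hx hxy) T.cast_nonneg

/-- If the landing of value `y` reaches its threshold although `a` is below that of `r`, then
`y < r`, and the uniform gap `γ T ≥ 1` of the deflation yields one spare chip. -/
lemma two_mul_add_one_lt_chipThreshold_add (he : 0 < e) (he1 : e ≤ 1) {γ : ℝ} {s : Set ℝ}
    (hγ : IsDeflationGapBound e γ s) (hs : s ⊆ Set.Icc 0 1) (hγT : 1 ≤ γ * T) {y z r : ℝ}
    (hys : y ∈ s) (hzs : z ∈ s) (hrs : r ∈ s) (hsum : 2 * r ≤ y + z) {a : ℕ}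
    (ha : a < chipThreshold e T r) (hya : chipThreshold e T y ≤ a) :
    2 * a + 1 < chipThreshold e T y + chipThreshold e T z := by
  have hy := hs hys
  have hz := hs hzs
  have hr := hs hrs
  have hT : (0 : ℝ) < T := by
    rcases (T.cast_nonneg : (0 : ℝ) ≤ T).lt_or_eq with h | h
    · exact h
    · rw [← h, mul_zero] at hγT; linarith
  have hy1 : y ≠ 1 := by
    rintro rfl
    rw [chipThreshold_one] at hya
    linarith [chipThreshold_le (T := T) he.le hr]
  have hr1 : r ≠ 1 := by
    rintro rfl
    exact hy1 (le_antisymm hy.2 (by linarith [hz.2]))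
  rw [chipThreshold_of_ne_one hy1] at hya ⊢
  rw [chipThreshold_of_ne_one hr1] at ha
  have hyr : y < r := by
    by_contra! hry
    have := mul_le_mul_of_nonneg_right (deflate_le_deflate he.le he1 hr.1 hry) hT.le
    linarith
  have hz' := deflate_mul_le_chipThreshold (e := e) (T := T) z
  nlinarith [hγ y hys z hzs r hrs hyr hsum]

lemma two_mul_add_one_lt_min_add_max (he : 0 < e) (he1 : e ≤ 1) {γ : ℝ} {s : Set ℝ}
    (hγ : IsDeflationGapBound e γ s) (hs : s ⊆ Set.Icc 0 1) (hγT : 1 ≤ γ * T) {y z r : ℝ}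
    (hys : y ∈ s) (hzs : z ∈ s) (hrs : r ∈ s) (hsum : 2 * r ≤ y + z) {a : ℕ}
    (ha : a < chipThreshold e T r) (hmin : min (chipThreshold e T y) (chipThreshold e T z) ≤ a) :
    2 * a + 1 < min (chipThreshold e T y) (chipThreshold e T z) +
      max (chipThreshold e T y) (chipThreshold e T z) := by
  rw [min_add_max]
  rcases min_le_iff.1 hmin with hya | hza
  · exact two_mul_add_one_lt_chipThreshold_add he he1 hγ hs hγT hys hzs hrs hsum ha hya
  · rw [add_comm (chipThreshold e T y)]
    exact two_mul_add_one_lt_chipThreshold_add he he1 hγ hs hγT hzs hys hrs (by linarith) ha hza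

lemma lt_chipThreshold_of_div_lt {ε r : ℝ} (he : 0 ≤ e) (heε : e ≤ ε) (hr : r ∈ Set.Icc 0 1)
    {a b : ℕ} (hpos : 0 < a + b) (hab : (a : ℝ) / ((a : ℝ) + (b : ℝ)) < r - ε) :
    (a : ℝ) < chipThreshold e (a + b) r := by
  have hpos' : (0 : ℝ) < a + b := by exact_mod_cast hpos
  rw [div_lt_iff₀ hpos'] at hab
  have := mul_le_mul_of_nonneg_right
    ((sub_le_sub_left heε r).trans (sub_le_deflate he hr)) hpos'.le
  have := deflate_mul_le_chipThreshold (e := e) (T := a + b) r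
  push_cast at this ⊢
  linarith

end Threshold

section Round

/-- Bob underbids when Alice's bid leaves her below `L`, and otherwise overbids her by one, which
`hgap` makes affordable and safe. -/
lemma aliceWinsAt_of_winStep {W : V → ℕ → ℕ → Bool → Prop} {v : V} {a b : ℕ} {adv : Bool}
    {L U : ℝ} (hLU : L ≤ U) (hU : U ≤ a + b + 1) (hgap : L ≤ a → 2 * a + 1 < L + U)
    (hA : ∀ a' b' adv', a' + b' = a + b → (a' : ℝ) < L → ¬ afterAlice G W v a' b' adv')
    (hB : ∀ a' b' adv', a' + b' = a + b → (a' : ℝ) < U → ¬ afterBob G W v a' b' adv')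
    (h : winStep G W v a b adv) : G.aliceWinsAt v := by
  rcases h with hv | ⟨α, hαa, hbid⟩
  · exact hv
  exfalso
  by_cases hL : ((a - α : ℕ) : ℝ) < L
  · rcases Nat.eq_zero_or_pos α with rfl | hα
    · obtain ⟨-, -, htrue, hfalse⟩ := hbid 0 (Nat.zero_le b)
      cases adv with
      | false => exact hA _ _ _ (by omega) hL (hfalse rfl rfl).2
      | true =>
        rcases htrue rfl rfl with h | h
        · exact hA _ _ _ (by omega) hL h
        · exact hB _ _ _ (by omega) (by simpa using hL.trans_le hLU) h
    · exact hA _ _ _ (by omega) hL ((hbid 0 (Nat.zero_le b)).1 hα)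
  · rw [not_lt, Nat.cast_sub hαa] at hL
    have hover : (a : ℝ) + α + 1 < U := by
      have := hgap (by linarith [(Nat.cast_nonneg α : (0 : ℝ) ≤ α)])
      linarith
    have hαb : α + 1 ≤ b := by
      have : (α : ℝ) < b := by linarith
      exact_mod_cast this
    exact hB _ _ _ (by omega) (by push_cast; linarith) ((hbid (α + 1) hαb).2.1 (by omega))

end Round

section Invariant

variable {R : V → ℝ} (hR : ∀ v, IsRichmanValueAt G v (R v)) {e : ℝ} (he : 0 < e) (he1 : e ≤ 1)
  {T : ℕ}

def ThresholdReached (e : ℝ) (R : V → ℝ) (T : ℕ) (v : V) (a b : ℕ) (_ : Bool) : Prop :=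
  a + b = T → chipThreshold e T (R v) ≤ a

lemma IsMaxBlueValue.exists_lt_chipThreshold {v : V} {p : ℝ} (hp : IsMaxBlueValue G R v p)
    {a : ℕ} (hap : a < chipThreshold e T p) :
    ∃ w, (restrictBlue G R).blue v w ∧ a < chipThreshold e T (R w) := by
  rcases hp.2 with rfl | ⟨w, hw, rfl⟩
  · rw [chipThreshold_zero] at hap
    exact absurd hap (Nat.cast_nonneg a).not_gt
  · exact ⟨w, ⟨hw, hp.1⟩, hap⟩

include hR he he1

lemma IsMinRedValue.chipThreshold_le {v w : V} {q : ℝ} (hq : IsMinRedValue G R v q)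
    (hw : G.red v w) : chipThreshold e T q ≤ chipThreshold e T (R w) :=
  chipThreshold_mono he.le he1 (extendedRange_subset_Icc hR hq.mem_extendedRange).1 (hq.1 w hw)
    (hR w).2.1

lemma not_afterAlice_of_lt_chipThreshold {v : V} {p q : ℝ} (hp : IsMaxBlueValue G R v p)
    (hq : IsMinRedValue G R v q) {a b : ℕ} {adv : Bool} (hsum : a + b = T)
    (hap : a < chipThreshold e T p) (haq : a < chipThreshold e T q) :
    ¬ afterAlice (restrictBlue G R) (ThresholdReached e R T) v a b adv := by
  rintro (⟨w, hw, hW⟩ | hall)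
  · exact (hW hsum).not_gt (haq.trans_le (hq.chipThreshold_le hR he he1 hw))
  · obtain ⟨w, hw, hlt⟩ := hp.exists_lt_chipThreshold hap
    exact (hall w hw hsum).not_gt hlt

lemma not_afterBob_of_lt_chipThreshold {v : V} {p q : ℝ} (hp : IsMaxBlueValue G R v p)
    (hq : IsMinRedValue G R v q) {a b : ℕ} {adv : Bool} (hsum : a + b = T)
    (h : a < chipThreshold e T p ∨ a < chipThreshold e T q) :
    ¬ afterBob (restrictBlue G R) (ThresholdReached e R T) v a b adv := by
  rintro ⟨hall, w, hw, hW⟩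
  rcases h with hap | haq
  · obtain ⟨w, hw, hlt⟩ := hp.exists_lt_chipThreshold hap
    exact (hall w hw hsum).not_gt hlt
  · exact (hW hsum).not_gt (haq.trans_le (hq.chipThreshold_le hR he he1 hw))

variable [Finite V] {γ : ℝ} (hγ : IsDeflationGapBound e γ (extendedRange R)) (hγT : 1 ≤ γ * T)
include hγ hγT

lemma thresholdReached_of_winStep {v : V} {a b : ℕ} {adv : Bool}
    (h : winStep (restrictBlue G R) (ThresholdReached e R T) v a b adv) :
    ThresholdReached e R T v a b adv := by
  intro hsum
  by_contra! ha
  obtain ⟨p, hp⟩ := exists_isMaxBlueValue G R v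
  obtain ⟨q, hq⟩ := exists_isMinRedValue G R v
  have hsub := extendedRange_subset_Icc hR
  have hTab : (T : ℝ) = a + b := by rw [← hsum]; push_cast; ring
  have hwin : G.aliceWinsAt v := by
    refine aliceWinsAt_of_winStep (G := restrictBlue G R)
      (L := min (chipThreshold e T p) (chipThreshold e T q))
      (U := max (chipThreshold e T p) (chipThreshold e T q)) min_le_max ?_ ?_ ?_ ?_ h
    · rw [← hTab]
      exact max_le (chipThreshold_le he.le (hsub hp.mem_extendedRange))
        (chipThreshold_le he.le (hsub hq.mem_extendedRange))
    · exact two_mul_add_one_lt_min_add_max he he1 hγ hsub hγT hp.mem_extendedRange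
        hq.mem_extendedRange (apply_mem_extendedRange v)
        (two_mul_le_add_of_isMaxBlueValue_of_isMinRedValue hR hp hq) ha
    · intro a' b' adv' hs hlt
      rw [lt_min_iff] at hlt
      exact not_afterAlice_of_lt_chipThreshold hR he he1 hp hq (hs.trans hsum) hlt.1 hlt.2
    · intro a' b' adv' hs hlt
      exact not_afterBob_of_lt_chipThreshold hR he he1 hp hq (hs.trans hsum) (lt_max_iff.1 hlt)
  rw [(hR v).eq_zero_of_aliceWinsAt hwin, chipThreshold_zero] at ha
  exact (Nat.cast_nonneg a).not_gt ha

lemma chipThreshold_le_of_aliceWins {v : V} {a b : ℕ} {adv : Bool} (hsum : a + b = T)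
    (h : AliceWins (restrictBlue G R) v a b adv) : chipThreshold e T (R v) ≤ a :=
  h (ThresholdReached e R T) (fun _ _ _ _ => thresholdReached_of_winStep hR he he1 hγ hγT) hsum

end Invariant

end BiddingGame

/-- **Theorem.**  Let `G` be a finite discrete bidding game, with Richman
value `R v` at each position `v`, and let `ε > 0`.  Then there is an `N` such
that Bob has a stable strategy preventing Alice from winning `G(a*, b)`
(Alice holding `a` chips plus the tie-breaking advantage, Bob holding `b`
chips) whenever `a / (a + b) < R(G) - ε` and `b ≥ N`.  (Bob has a stable
strategy preventing Alice from winning iff Alice has no winning strategy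
against Bob restricted to stable moves, i.e. in the game `restrictBlue G R`
in which Bob only ever moves to positions of maximal Richman value.) -/
theorem stable_prevention_below_threshold {V : Type} [Finite V]
    (G : BiddingGame V)
    (R : V → ℝ) (hR : ∀ v, IsRichmanValueAt G v (R v))
    (ε : ℝ) (hε : 0 < ε) :
    ∃ N : ℕ, ∀ a b : ℕ,
      (a : ℝ) / ((a : ℝ) + (b : ℝ)) < R G.start - ε → N ≤ b →
      ¬ AliceWins (restrictBlue G R) G.start a b true := by
  set e := min ε 1
  have he : 0 < e := lt_min hε one_pos
  obtain ⟨γ, hγ0, hγ⟩ := exists_pos_isDeflationGapBound he (min_le_right ε 1)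
    (extendedRange_finite R) fun x hx => (extendedRange_subset_Icc hR hx).1
  refine ⟨⌈γ⁻¹⌉₊, fun a b hab hb hwin => ?_⟩
  have hT : γ⁻¹ ≤ ((a + b : ℕ) : ℝ) :=
    (Nat.le_ceil _).trans (by exact_mod_cast hb.trans (Nat.le_add_left b a))
  have hγT : 1 ≤ γ * ((a + b : ℕ) : ℝ) := by rwa [inv_le_iff_one_le_mul₀' hγ0] at hT
  have hpos : 0 < a + b := by exact_mod_cast (inv_pos.2 hγ0).trans_le hT
  have hstart := lt_chipThreshold_of_div_lt he.le (min_le_left ε 1)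
    (extendedRange_subset_Icc hR (apply_mem_extendedRange G.start)) hpos hab
  exact (chipThreshold_le_of_aliceWins hR he (min_le_right ε 1) hγ hγT rfl hwin).not_gt hstart
end

section
/- Let S = {k ∈ ℕ : there exists an odd integer n ≥ 1 with k ≡ 2^{n−1} − 1 (mod 2^n)}, i.e., the set of k congruent to 0 mod 2, or 3 mod 8, or 15 mod 32, or in general 2^{n−1} − 1 mod 2^n for some odd n. Then S is not a finite union of arithmetic progressions; equivalently, the indicator function of S is not eventually periodic: there is no period p ≥ 1 and threshold N such that for all k ≥ N, k ∈ S if and only if k + p ∈ S. -/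
/-- The set of nonnegative integers `k` for which there is an odd `n ≥ 1`
with `k ≡ 2^(n-1) - 1 (mod 2^n)`: the `k` congruent to `0 mod 2`, or
`3 mod 8`, or `15 mod 32`, and so on. -/
def ultimatumDrawSet : Set ℕ :=
  {k : ℕ | ∃ n : ℕ, Odd n ∧ k ≡ 2 ^ (n - 1) - 1 [MOD 2 ^ n]}

/-!
Membership of `k` in the set depends only on the parity of the 2-adic valuation of `k + 1`.
For any `p ≥ 1` and `N`, the number `k = 2p(2N + 1) - 1` exceeds `N`, and
`v₂(k + 1) = v₂(p) + 1` while `v₂(k + p + 1) = v₂(p(4N + 3)) = v₂(p)`, so `p` is not an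
eventual period. A finite union of arithmetic progressions is eventually periodic, with the
product of the nonzero common differences as a period, so it cannot be the set either.
-/

def IsPeriodicFrom (S : Set ℕ) (p N : ℕ) : Prop :=
  ∀ k, N ≤ k → (k ∈ S ↔ k + p ∈ S)

def IsEventuallyPeriodic (S : Set ℕ) : Prop :=
  ∃ p, 1 ≤ p ∧ ∃ N, IsPeriodicFrom S p N

def arithProg (a d : ℕ) : Set ℕ :=
  {k | ∃ m, k = a + d * m}

theorem mem_arithProg_iff {a d k : ℕ} : k ∈ arithProg a d ↔ a ≤ k ∧ d ∣ k - a := by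
  constructor
  · rintro ⟨m, rfl⟩
    exact ⟨Nat.le_add_right a _, by simp⟩
  · rintro ⟨hak, m, hm⟩
    exact ⟨m, by omega⟩

theorem isPeriodicFrom_arithProg {a d p N : ℕ} (haN : a ≤ N) (hdp : d ∣ p) :
    IsPeriodicFrom (arithProg a d) p N := by
  intro k hk
  have hsub : k + p - a = k - a + p := by omega
  simp only [mem_arithProg_iff, hsub, Nat.dvd_add_left hdp]
  omega

theorem isPeriodicFrom_of_subset_Iio {S : Set ℕ} {p N : ℕ} (hS : S ⊆ Set.Iio N) :
    IsPeriodicFrom S p N := fun k hk =>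
  iff_of_false (fun h => (hS h).not_ge hk)
    (fun h => (hS h).not_ge (hk.trans (Nat.le_add_right k p)))

theorem IsPeriodicFrom.biUnion {ι : Type*} {I : Finset ι} {S : ι → Set ℕ} {p N : ℕ}
    (h : ∀ i ∈ I, IsPeriodicFrom (S i) p N) : IsPeriodicFrom (⋃ i ∈ I, S i) p N := by
  intro k hk
  simp only [Set.mem_iUnion₂]
  exact exists₂_congr fun i hi => h i hi k hk

theorem isEventuallyPeriodic_biUnion_arithProg (I : Finset (ℕ × ℕ)) :
    IsEventuallyPeriodic (⋃ q ∈ I, arithProg q.1 q.2) := by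
  refine ⟨∏ q ∈ I, max q.2 1, Finset.one_le_prod' fun _ _ => le_max_right _ _,
    I.sup Prod.fst + 1, IsPeriodicFrom.biUnion fun q hq => ?_⟩
  have hq1 : q.1 ≤ I.sup Prod.fst := Finset.le_sup (f := Prod.fst) hq
  rcases Nat.eq_zero_or_pos q.2 with hd | hd
  · refine isPeriodicFrom_of_subset_Iio ?_
    rintro k ⟨m, rfl⟩
    simp only [hd, zero_mul, add_zero, Set.mem_Iio]
    omega
  · refine isPeriodicFrom_arithProg (by omega) ?_
    have := Finset.dvd_prod_of_mem (fun q : ℕ × ℕ => max q.2 1) hq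
    rwa [max_eq_left (show 1 ≤ q.2 from hd)] at this

theorem modEq_two_pow_iff_padicValNat_eq {x j : ℕ} (hx : x ≠ 0) :
    x ≡ 2 ^ j [MOD 2 ^ (j + 1)] ↔ padicValNat 2 x = j := by
  have hval : padicValNat 2 x = j ↔ 2 ^ j ∣ x ∧ ¬ 2 ^ (j + 1) ∣ x := by
    rw [padicValNat_dvd_iff_le hx, padicValNat_dvd_iff_le hx]
    omega
  have hP : 0 < 2 ^ j := Nat.two_pow_pos j
  rw [hval, pow_succ]
  constructor
  · intro h
    have hmod : x % (2 ^ j * 2) = 2 ^ j := Eq.trans h (Nat.mod_eq_of_lt (by omega))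
    refine ⟨Nat.dvd_of_mod_eq_zero ?_, fun hdvd => ?_⟩
    · rw [← Nat.mod_mul_right_mod, hmod, Nat.mod_self]
    · have := Nat.mod_eq_zero_of_dvd hdvd
      omega
  · rintro ⟨⟨c, rfl⟩, hc⟩
    rw [mul_dvd_mul_iff_left hP.ne', ← even_iff_two_dvd, Nat.not_even_iff_odd] at hc
    obtain ⟨t, rfl⟩ := hc
    rw [Nat.ModEq, show 2 ^ j * (2 * t + 1) = 2 ^ j + 2 ^ j * 2 * t by ring,
      Nat.add_mul_mod_self_left]

theorem mem_ultimatumDrawSet_iff {k : ℕ} :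
    k ∈ ultimatumDrawSet ↔ Even (padicValNat 2 (k + 1)) := by
  have hcong (j : ℕ) : k ≡ 2 ^ j - 1 [MOD 2 ^ (j + 1)] ↔ padicValNat 2 (k + 1) = j := by
    rw [← modEq_two_pow_iff_padicValNat_eq k.succ_ne_zero]
    nth_rewrite 2 [← Nat.sub_add_cancel (Nat.one_le_two_pow (n := j))]
    exact ⟨fun h => h.add_right 1, Nat.ModEq.add_right_cancel' 1⟩
  constructor
  · rintro ⟨_, ⟨j, rfl⟩, hk⟩
    rw [Nat.add_sub_cancel, hcong] at hk
    exact ⟨j, by omega⟩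
  · intro h
    exact ⟨_, h.add_one, by rw [Nat.add_sub_cancel, hcong]⟩

theorem padicValNat_mul_of_not_dvd {p a b : ℕ} [Fact p.Prime] (ha : a ≠ 0) (hb : ¬ p ∣ b) :
    padicValNat p (a * b) = padicValNat p a := by
  rw [padicValNat.mul ha (by rintro rfl; exact hb (dvd_zero p)),
    padicValNat.eq_zero_of_not_dvd hb, add_zero]

theorem exists_padicValNat_two_eq_succ (p N : ℕ) (hp : 1 ≤ p) :
    ∃ k, N ≤ k ∧ padicValNat 2 (k + 1) = padicValNat 2 (k + p + 1) + 1 := by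
  have hbig : 2 * (2 * N + 1) ≤ 2 * p * (2 * N + 1) := Nat.mul_le_mul_right _ (by omega)
  refine ⟨2 * p * (2 * N + 1) - 1, by omega, ?_⟩
  have hk : 2 * p * (2 * N + 1) - 1 + 1 = 2 * p * (2 * N + 1) := by omega
  have hkp : 2 * p * (2 * N + 1) - 1 + p + 1 = p * (4 * N + 3) := by
    have e₁ : 2 * p * (2 * N + 1) = 4 * (p * N) + 2 * p := by ring
    have e₂ : p * (4 * N + 3) = 4 * (p * N) + 3 * p := by ring
    omega
  rw [hk, hkp, padicValNat_mul_of_not_dvd (a := 2 * p) (by omega) (by omega),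
    padicValNat_mul_of_not_dvd (a := p) (by omega) (by omega),
    padicValNat.mul two_ne_zero (by omega), padicValNat_self, add_comm]

theorem ultimatumDrawSet_not_isEventuallyPeriodic : ¬ IsEventuallyPeriodic ultimatumDrawSet := by
  rintro ⟨p, hp, N, hper⟩
  obtain ⟨k, hk, hv⟩ := exists_padicValNat_two_eq_succ p N hp
  have := hper k hk
  rw [mem_ultimatumDrawSet_iff, mem_ultimatumDrawSet_iff, hv, Nat.even_add_one] at this
  exact (iff_not_self this.symm).elim

/-- **Aperiodicity.**  The set `S` of `k` congruent to `2^(n-1) - 1 mod 2^n`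
for some odd `n` is not a finite union of arithmetic progressions
(`{a + d·m : m ∈ ℕ}`, singletons being the case `d = 0`); equivalently, its
indicator function is not eventually periodic: there is no period `p ≥ 1` and
threshold `N` such that for all `k ≥ N`, `k ∈ S` iff `k + p ∈ S`. -/
theorem ultimatumDrawSet_aperiodic :
    (¬ ∃ I : Finset (ℕ × ℕ),
        ultimatumDrawSet = ⋃ p ∈ I, {k : ℕ | ∃ m : ℕ, k = p.1 + p.2 * m}) ∧
    (¬ ∃ p : ℕ, 1 ≤ p ∧ ∃ N : ℕ, ∀ k : ℕ, N ≤ k →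
        (k ∈ ultimatumDrawSet ↔ k + p ∈ ultimatumDrawSet)) := by
  refine ⟨?_, ultimatumDrawSet_not_isEventuallyPeriodic⟩
  rintro ⟨I, hI⟩
  apply ultimatumDrawSet_not_isEventuallyPeriodic
  rw [hI]
  exact isEventuallyPeriodic_biUnion_arithProg I
end
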